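/- Let c ≥ 1 and let d₁, …, d_c be integers with each dᵢ ≥ 2, and set d = d₁⋯d_c. Define H(𝐝) = Σ_{∅ ≠ S ⊆ {1,…,c}} ((1+y)(1+z))^{|S|−1} · Π_{i∈S} H(dᵢ) in ℤ[[y,z]]. Then for every integer p ≥ 1, the coefficient of y^p z^p in H(𝐝) is at least d − 1. (By Hirzebruch's formula this coefficient is the primitive Hodge number h^{p,p}_o(𝐝) = h^{p,p}(𝐝) − 1 of a smooth complete intersection of multidegree 𝐝 and dimension 2p, so this says h^{p,p}(𝐝) ≥ d.) -/

import Mathlib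

open MvPowerSeries

/-- `Q_d = Σ_{i,j ≥ 1} C(d, i+j) yⁱzʲ` as a power series in `ℤ[[y,z]]`
(`y = X 0`, `z = X 1`). -/
def Q (d : ℕ) : MvPowerSeries (Fin 2) ℤ :=
  fun e => if 1 ≤ e 0 ∧ 1 ≤ e 1 then (d.choose (e 0 + e 1) : ℤ) else 0

/-- `P_d = Σ_{i,j ≥ 0} C(d-1, i+j+1) yⁱzʲ` as a power series in `ℤ[[y,z]]`. -/
def P (d : ℕ) : MvPowerSeries (Fin 2) ℤ :=
  fun e => ((d - 1).choose (e 0 + e 1 + 1) : ℤ)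

/-- `H(d) = P_d · (1 - Q_d)⁻¹` (`1 - Q_d` is a unit of `ℤ[[y,z]]`, and
`Ring.inverse` gives its inverse). -/
noncomputable def H (d : ℕ) : MvPowerSeries (Fin 2) ℤ := P d * Ring.inverse (1 - Q d)

/-- `H(𝐝) = Σ_{∅ ≠ S ⊆ {1,…,c}} ((1+y)(1+z))^{|S|-1} · Π_{i∈S} H(dᵢ)`, the
generating series of the primitive Hodge numbers of a complete intersection of
multidegree `𝐝 = (d₁,…,d_c)`. -/
noncomputable def Hmulti {c : ℕ} (ds : Fin c → ℕ) : MvPowerSeries (Fin 2) ℤ :=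
  ∑ S ∈ Finset.univ.powerset.erase (∅ : Finset (Fin c)),
    ((1 + X 0) * (1 + X 1)) ^ (S.card - 1) * ∏ i ∈ S, H (ds i)

/-!
All series involved have nonnegative coefficients, so a coefficient of a product is bounded
below by any single term `coeff e₁ A * coeff e₂ B` of its convolution sum. Since
`(1 - Q_d)⁻¹ = 1 + Q_d (1 - Q_d)⁻¹` and the `yz`-coefficient of `Q_d` is `C(d,2) ≥ 1`, every
diagonal coefficient of `(1 - Q_d)⁻¹` is at least `1`; multiplying by the constant term
`d - 1` of `P_d` gives `[yᵖzᵖ] H(d) ≥ d - 1`. For a nonempty `S`, the term indexed by `S`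
therefore has `yᵖzᵖ`-coefficient at least `∏_{i∈S} (dᵢ - 1)` (take `yᵖzᵖ` from one factor and
the constant terms from the others), and `∏ dᵢ - 1 = Σ_{S ≠ ∅} ∏_{i∈S} (dᵢ - 1)`.
-/

namespace MvPowerSeries

section OrderedSemiring

variable (σ R : Type*) [CommSemiring R] [PartialOrder R] [IsOrderedRing R]

def nonneg : Subsemiring (MvPowerSeries σ R) where
  carrier := {F | ∀ e, 0 ≤ coeff e F}
  mul_mem' {A B} hA hB e := by
    classical
    rw [coeff_mul]
    exact Finset.sum_nonneg fun ab _ => mul_nonneg (hA ab.1) (hB ab.2)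
  one_mem' e := by
    classical
    rw [coeff_one]
    split_ifs <;> simp
  add_mem' hA hB e := by
    rw [map_add]
    exact add_nonneg (hA e) (hB e)
  zero_mem' e := by simp

variable {σ R}

theorem X_mem_nonneg (i : σ) : X i ∈ nonneg σ R := fun e => by
  classical
  rw [coeff_X]
  split_ifs <;> simp

theorem coeff_mul_coeff_le_coeff_mul {A B : MvPowerSeries σ R} (hA : A ∈ nonneg σ R)
    (hB : B ∈ nonneg σ R) (e₁ e₂ : σ →₀ ℕ) :
    coeff e₁ A * coeff e₂ B ≤ coeff (e₁ + e₂) (A * B) := by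
  classical
  rw [coeff_mul]
  have hmem : (e₁, e₂) ∈ Finset.HasAntidiagonal.antidiagonal (e₁ + e₂) :=
    Finset.HasAntidiagonal.mem_antidiagonal.mpr rfl
  exact Finset.single_le_sum (fun ab _ => mul_nonneg (hA ab.1) (hB ab.2)) hmem

theorem coeff_mul_prod_erase_constantCoeff_le_coeff_prod {ι : Type*} [DecidableEq ι]
    {s : Finset ι} {F : ι → MvPowerSeries σ R} (hF : ∀ i ∈ s, F i ∈ nonneg σ R) {i₀ : ι}
    (hi₀ : i₀ ∈ s) (e : σ →₀ ℕ) :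
    coeff e (F i₀) * ∏ i ∈ s.erase i₀, constantCoeff (F i) ≤ coeff e (∏ i ∈ s, F i) := by
  rw [← Finset.mul_prod_erase s F hi₀, ← map_prod, ← coeff_zero_eq_constantCoeff_apply]
  simpa using coeff_mul_coeff_le_coeff_mul (hF i₀ hi₀)
    (prod_mem fun i hi => hF i (Finset.mem_of_mem_erase hi)) e 0

end OrderedSemiring

section Ring

variable {σ R : Type*} [CommRing R] {Q : MvPowerSeries σ R}

theorem inverse_one_sub_eq_one_add_mul (hQ : constantCoeff Q = 0) :
    Ring.inverse (1 - Q) = 1 + Q * Ring.inverse (1 - Q) := by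
  have hunit : IsUnit (1 - Q) := by simp [isUnit_iff_constantCoeff, hQ]
  have h := Ring.mul_inverse_cancel _ hunit
  rw [one_sub_mul] at h
  exact sub_eq_iff_eq_add.mp h

theorem constantCoeff_inverse_one_sub (hQ : constantCoeff Q = 0) :
    constantCoeff (Ring.inverse (1 - Q)) = 1 := by
  have h := congrArg constantCoeff (inverse_one_sub_eq_one_add_mul hQ)
  simpa [hQ] using h

end Ring

section OrderedRing

variable {σ R : Type*} [CommRing R] [PartialOrder R] [IsOrderedRing R] {Q : MvPowerSeries σ R}

-- As `Q` has no constant term, `(1 - Q)⁻¹ = 1 + Q (1 - Q)⁻¹` expresses the coefficient at `e`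
-- through coefficients at exponents `< e`.
theorem inverse_one_sub_mem_nonneg (hQ : constantCoeff Q = 0) (hQ_nonneg : Q ∈ nonneg σ R) :
    Ring.inverse (1 - Q) ∈ nonneg σ R := by
  classical
  intro e
  induction e using WellFoundedLT.induction with
  | ind e ih =>
    rw [inverse_one_sub_eq_one_add_mul hQ, map_add, coeff_mul]
    refine add_nonneg (one_mem (nonneg σ R) e) (Finset.sum_nonneg fun ⟨a, b⟩ hab => ?_)
    rw [Finset.HasAntidiagonal.mem_antidiagonal] at hab
    rcases eq_or_ne a 0 with rfl | ha
    · simp [hQ]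
    · exact mul_nonneg (hQ_nonneg a) (ih b (hab ▸ lt_add_of_pos_left b (pos_iff_ne_zero.mpr ha)))

theorem one_le_coeff_nsmul_inverse_one_sub (hQ : constantCoeff Q = 0)
    (hQ_nonneg : Q ∈ nonneg σ R) {f : σ →₀ ℕ} (hf : 1 ≤ coeff f Q) (n : ℕ) :
    1 ≤ coeff (n • f) (Ring.inverse (1 - Q)) := by
  induction n with
  | zero => simp [constantCoeff_inverse_one_sub hQ]
  | succ n ih =>
    have hR := inverse_one_sub_mem_nonneg hQ hQ_nonneg
    calc 1 ≤ coeff f Q * coeff (n • f) (Ring.inverse (1 - Q)) :=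
          one_le_mul_of_one_le_of_one_le hf ih
      _ ≤ coeff (f + n • f) (Q * Ring.inverse (1 - Q)) :=
          coeff_mul_coeff_le_coeff_mul hQ_nonneg hR f (n • f)
      _ ≤ coeff ((n + 1) • f) (Ring.inverse (1 - Q)) := by
          conv_rhs => rw [inverse_one_sub_eq_one_add_mul hQ]
          rw [map_add, succ_nsmul', le_add_iff_nonneg_left]
          exact one_mem (nonneg σ R) _

end OrderedRing

end MvPowerSeries

theorem Q_mem_nonneg (d : ℕ) : Q d ∈ nonneg (Fin 2) ℤ := fun e => by
  rw [coeff_apply, Q]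
  split_ifs <;> positivity

theorem constantCoeff_Q (d : ℕ) : constantCoeff (Q d) = 0 := by
  rw [← coeff_zero_eq_constantCoeff_apply, coeff_apply, Q]
  simp

theorem one_le_coeff_Q (d : ℕ) (hd : 2 ≤ d) :
    1 ≤ coeff (Finsupp.single 0 1 + Finsupp.single 1 1) (Q d) := by
  rw [coeff_apply, Q]
  simpa [Nat.one_le_iff_ne_zero] using (Nat.choose_pos hd).ne'

theorem P_mem_nonneg (d : ℕ) : P d ∈ nonneg (Fin 2) ℤ := fun e => by
  rw [coeff_apply, P]
  positivity

theorem constantCoeff_P (d : ℕ) (hd : 1 ≤ d) : constantCoeff (P d) = d - 1 := by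
  rw [← coeff_zero_eq_constantCoeff_apply, coeff_apply, P]
  simp [Nat.cast_sub hd]

theorem inverse_one_sub_Q_mem_nonneg (d : ℕ) : Ring.inverse (1 - Q d) ∈ nonneg (Fin 2) ℤ :=
  inverse_one_sub_mem_nonneg (constantCoeff_Q d) (Q_mem_nonneg d)

theorem H_mem_nonneg (d : ℕ) : H d ∈ nonneg (Fin 2) ℤ :=
  mul_mem (P_mem_nonneg d) (inverse_one_sub_Q_mem_nonneg d)

theorem constantCoeff_H (d : ℕ) (hd : 1 ≤ d) : constantCoeff (H d) = d - 1 := by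
  rw [H, map_mul, constantCoeff_P d hd, constantCoeff_inverse_one_sub (constantCoeff_Q d),
    mul_one]

theorem sub_one_le_coeff_H_diag (d : ℕ) (hd : 2 ≤ d) (p : ℕ) :
    (d : ℤ) - 1 ≤ coeff (Finsupp.single 0 p + Finsupp.single 1 p) (H d) := by
  have hdiag : Finsupp.single (0 : Fin 2) p + Finsupp.single 1 p =
      p • (Finsupp.single 0 1 + Finsupp.single 1 1) := by
    simp [Finsupp.smul_single]
  have hR : 1 ≤ coeff (Finsupp.single 0 p + Finsupp.single 1 p) (Ring.inverse (1 - Q d)) := by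
    rw [hdiag]
    exact one_le_coeff_nsmul_inverse_one_sub (constantCoeff_Q d) (Q_mem_nonneg d)
      (one_le_coeff_Q d hd) p
  calc (d : ℤ) - 1 ≤ constantCoeff (P d) *
        coeff (Finsupp.single 0 p + Finsupp.single 1 p) (Ring.inverse (1 - Q d)) := by
        rw [constantCoeff_P d (by omega)]
        exact le_mul_of_one_le_right (by omega) hR
    _ ≤ coeff (Finsupp.single 0 p + Finsupp.single 1 p) (H d) := by
        simpa [H] using coeff_mul_coeff_le_coeff_mul (P_mem_nonneg d)
          (inverse_one_sub_Q_mem_nonneg d) 0 (Finsupp.single 0 p + Finsupp.single 1 p)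

theorem prod_sub_one_le_coeff_Hmulti_term {c : ℕ} (ds : Fin c → ℕ) (hds : ∀ i, 2 ≤ ds i)
    (p : ℕ) {S : Finset (Fin c)} (hS : S.Nonempty) :
    ∏ i ∈ S, ((ds i : ℤ) - 1) ≤ coeff (Finsupp.single 0 p + Finsupp.single 1 p)
      (((1 + X 0) * (1 + X 1)) ^ (S.card - 1) * ∏ i ∈ S, H (ds i)) := by
  set e : Fin 2 →₀ ℕ := Finsupp.single 0 p + Finsupp.single 1 p
  obtain ⟨i₀, hi₀⟩ := hS
  have hU : ((1 + X 0) * (1 + X 1) : MvPowerSeries (Fin 2) ℤ) ^ (S.card - 1) ∈ nonneg (Fin 2) ℤ :=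
    pow_mem (mul_mem (add_mem (one_mem _) (X_mem_nonneg 0))
      (add_mem (one_mem _) (X_mem_nonneg 1))) _
  have hHS : ∀ i ∈ S, H (ds i) ∈ nonneg (Fin 2) ℤ := fun i _ => H_mem_nonneg (ds i)
  have hconst : ∀ i, constantCoeff (H (ds i)) = (ds i : ℤ) - 1 :=
    fun i => constantCoeff_H _ (by linarith [hds i])
  calc ∏ i ∈ S, ((ds i : ℤ) - 1)
      = ((ds i₀ : ℤ) - 1) * ∏ i ∈ S.erase i₀, constantCoeff (H (ds i)) := by
        rw [← Finset.mul_prod_erase S _ hi₀]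
        simp only [hconst]
    _ ≤ coeff e (H (ds i₀)) * ∏ i ∈ S.erase i₀, constantCoeff (H (ds i)) := by
        gcongr
        · exact Finset.prod_nonneg fun i _ => by linarith [hconst i, hds i]
        · exact sub_one_le_coeff_H_diag _ (hds i₀) p
    _ ≤ coeff e (∏ i ∈ S, H (ds i)) :=
        coeff_mul_prod_erase_constantCoeff_le_coeff_prod hHS hi₀ e
    _ ≤ coeff e (((1 + X 0) * (1 + X 1)) ^ (S.card - 1) * ∏ i ∈ S, H (ds i)) := by
        simpa using coeff_mul_coeff_le_coeff_mul hU (prod_mem hHS) 0 e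

theorem Finset.prod_sub_one_eq_sum_powerset_erase_empty {ι R : Type*} [CommRing R]
    [DecidableEq ι] (s : Finset ι) (f : ι → R) :
    ∏ i ∈ s, f i - 1 = ∑ t ∈ s.powerset.erase ∅, ∏ i ∈ t, (f i - 1) := by
  have h := Finset.prod_add_one (f := fun i => f i - 1) s
  simp only [sub_add_cancel] at h
  rw [h, ← Finset.add_sum_erase _ _ (Finset.empty_mem_powerset s), Finset.prod_empty,
    add_sub_cancel_left]

theorem stmt8_general (c : ℕ) (ds : Fin c → ℕ) (hds : ∀ i, 2 ≤ ds i) (p : ℕ) :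
    ((∏ i, ds i : ℕ) : ℤ) - 1 ≤
      coeff (Finsupp.single 0 p + Finsupp.single 1 p) (Hmulti ds) := by
  rw [Hmulti, map_sum, Nat.cast_prod, Finset.prod_sub_one_eq_sum_powerset_erase_empty]
  exact Finset.sum_le_sum fun S hS =>
    prod_sub_one_le_coeff_Hmulti_term ds hds p
      (Finset.nonempty_iff_ne_empty.mpr (Finset.ne_of_mem_erase hS))

/-- Lemma 2.2(a): for `𝐝 = (d₁,…,d_c)` with `c ≥ 1` and each `dᵢ ≥ 2`, and
`d = d₁⋯d_c`, the coefficient of `y^p z^p` in `H(𝐝)` is at least `d - 1` for every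
`p ≥ 1` (i.e. `h^{p,p}(𝐝) ≥ d`). -/
theorem stmt8 (c : ℕ) (hc : 1 ≤ c) (ds : Fin c → ℕ) (hds : ∀ i, 2 ≤ ds i)
    (p : ℕ) (hp : 1 ≤ p) :
    ((∏ i, ds i : ℕ) : ℤ) - 1 ≤
      coeff (Finsupp.single 0 p + Finsupp.single 1 p) (Hmulti ds) :=
  stmt8_general c ds hds p
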